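/- Define L(λ) = −λ²(s²/16)K² + λΦ + z z* and A(λ) = (i s/2)K + (2/λ) z z*, with Φ = (1/2)(w z* − z w*) + (i s/4)(K z z* + z z* K). Then along solutions of z' = w, w' = −i s K w + μ z with |z|² = 1 and Re⟨w,z⟩ = 0, the Lax equation L(λ)' = [L(λ), A(λ)] holds for all λ ≠ 0. -/

import Mathlib

section Aux

open Complex Matrix

noncomputable def outerM {ℓ : ℕ} (a b : Fin ℓ → ℂ) : Matrix (Fin ℓ) (Fin ℓ) ℂ :=
  Matrix.of fun i j => a i * (starRingEnd ℂ) (b j)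

lemma outer_mul_outer {ℓ : ℕ} (a b c d : Fin ℓ → ℂ) :
    outerM a b * outerM c d = (∑ k, c k * (starRingEnd ℂ) (b k)) • outerM a d := by
  ext i j
  simp only [outerM, Matrix.mul_apply, Matrix.of_apply, Matrix.smul_apply, smul_eq_mul,
    Finset.sum_mul]
  exact Finset.sum_congr rfl fun k _ => by ring

lemma diag_mul_outer {ℓ : ℕ} (K : Fin ℓ → ℝ) (a b : Fin ℓ → ℂ) :
    Matrix.diagonal (fun i => (K i : ℂ)) * outerM a b = outerM (fun i => (K i : ℂ) * a i) b := by
  ext i j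
  simp only [outerM, Matrix.diagonal_mul, Matrix.of_apply]
  ring

lemma outer_mul_diag {ℓ : ℕ} (K : Fin ℓ → ℝ) (a b : Fin ℓ → ℂ) :
    outerM a b * Matrix.diagonal (fun i => (K i : ℂ)) = outerM a (fun j => (K j : ℂ) * b j) := by
  ext i j
  simp only [outerM, Matrix.mul_diagonal, Matrix.of_apply, _root_.map_mul, Complex.conj_ofReal]
  ring

end Aux

/-- The rank-one matrix `z z*` with entries `zᵢ conj(zⱼ)`. -/
noncomputable def zzStar {ℓ : ℕ} (z : Fin ℓ → ℂ) : Matrix (Fin ℓ) (Fin ℓ) ℂ :=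
  Matrix.of fun i j => z i * (starRingEnd ℂ) (z j)

/-- `Φ_0 = (1/2)(w z* − z w*)`. -/
noncomputable def phiZero {ℓ : ℕ} (z w : Fin ℓ → ℂ) : Matrix (Fin ℓ) (Fin ℓ) ℂ :=
  Matrix.of fun i j => (1 / 2 : ℂ) *
    (w i * (starRingEnd ℂ) (z j) - z i * (starRingEnd ℂ) (w j))

/-- The complex magnetic momentum map
`Φ = (1/2)(w z* − z w*) + (i s/4)(K z z* + z z* K)`. -/
noncomputable def phiU {ℓ : ℕ} (s : ℝ) (K : Fin ℓ → ℝ) (z w : Fin ℓ → ℂ) :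
    Matrix (Fin ℓ) (Fin ℓ) ℂ :=
  phiZero z w + (Complex.I * s / 4) •
    (Matrix.diagonal (fun i => (K i : ℂ)) * zzStar z
      + zzStar z * Matrix.diagonal (fun i => (K i : ℂ)))

/-- The Lax matrix `L(λ) = −λ²(s²/16)K² + λΦ + zz*`. -/
noncomputable def laxL {ℓ : ℕ} (s lam : ℝ) (K : Fin ℓ → ℝ) (z w : Fin ℓ → ℂ) :
    Matrix (Fin ℓ) (Fin ℓ) ℂ :=
  (-(((lam : ℂ)) ^ 2 * (s : ℂ) ^ 2 / 16)) •
      (Matrix.diagonal (fun i => (K i : ℂ))) ^ 2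
    + (lam : ℂ) • phiU s K z w + zzStar z

/-- The matrix `A(λ) = (is/2)K + (2/λ) zz*`. -/
noncomputable def laxA {ℓ : ℕ} (s lam : ℝ) (K : Fin ℓ → ℝ) (z : Fin ℓ → ℂ) :
    Matrix (Fin ℓ) (Fin ℓ) ℂ :=
  (Complex.I * s / 2) • Matrix.diagonal (fun i => (K i : ℂ))
    + (2 / (lam : ℂ)) • zzStar z

section Aux2

open Complex Matrix

lemma zzStar_eq {ℓ : ℕ} (z : Fin ℓ → ℂ) : zzStar z = outerM z z := rfl

lemma phiZero_eq {ℓ : ℕ} (z w : Fin ℓ → ℂ) :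
    phiZero z w = (1/2 : ℂ) • (outerM w z - outerM z w) := by
  ext i j; simp [phiZero, outerM]

lemma comm_eval {ℓ : ℕ} (Z W : Fin ℓ → ℂ) (K : Fin ℓ → ℝ) (s lam : ℝ) (hlam : lam ≠ 0)
    (h1 : ∑ k, Z k * (starRingEnd ℂ) (Z k) = 1)
    (h2 : ∑ k, (W k * (starRingEnd ℂ) (Z k) + (starRingEnd ℂ) (W k) * Z k) = 0) :
    laxL s lam K Z W * laxA s lam K Z - laxA s lam K Z * laxL s lam K Z W
      = (lam : ℂ) • ((Complex.I * s / 2) •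
          (phiZero Z W * Matrix.diagonal (fun i => (K i : ℂ))
            - Matrix.diagonal (fun i => (K i : ℂ)) * phiZero Z W))
        + (outerM W Z + outerM Z W) := by
  simp only [laxL, laxA, phiU, zzStar_eq, phiZero_eq, pow_two,
    Matrix.add_mul, Matrix.mul_add, Matrix.sub_mul, Matrix.mul_sub,
    Matrix.smul_mul, Matrix.mul_smul, smul_add, smul_sub, smul_smul,
    Matrix.diagonal_mul_diagonal, diag_mul_outer, outer_mul_diag, outer_mul_outer]
  ext i j
  simp only [Matrix.add_apply, Matrix.sub_apply, Matrix.smul_apply, Matrix.diagonal_apply,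
    outerM, Matrix.of_apply, smul_eq_mul]
  simp only [Matrix.diagonal_mul, Matrix.mul_diagonal, Matrix.of_apply, _root_.map_mul,
    Complex.conj_ofReal, mul_assoc]
  have h2' : ∑ k, Z k * (starRingEnd ℂ) (W k) = -∑ k, W k * (starRingEnd ℂ) (Z k) := by
    have h0 : (∑ k, W k * (starRingEnd ℂ) (Z k)) + ∑ k, (starRingEnd ℂ) (W k) * Z k = 0 := by
      rw [← Finset.sum_add_distrib]; exact h2
    have h3 : ∑ k, (starRingEnd ℂ) (W k) * Z k = ∑ k, Z k * (starRingEnd ℂ) (W k) :=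
      Finset.sum_congr rfl fun k _ => mul_comm _ _
    rw [h3] at h0; linear_combination h0
  have hK1 : ∑ k, Z k * ((K k : ℂ) * (starRingEnd ℂ) (Z k))
      = ∑ k, (K k : ℂ) * Z k * (starRingEnd ℂ) (Z k) :=
    Finset.sum_congr rfl fun k _ => by ring
  have hK2 : ∑ k, (K k : ℂ) * (Z k * (starRingEnd ℂ) (Z k))
      = ∑ k, (K k : ℂ) * Z k * (starRingEnd ℂ) (Z k) :=
    Finset.sum_congr rfl fun k _ => by ring
  rw [hK1, hK2, h1, h2']
  have hlam' : (lam : ℂ) ≠ 0 := Complex.ofReal_ne_zero.mpr hlam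
  have hinv : (lam : ℂ) * (lam : ℂ)⁻¹ = 1 := mul_inv_cancel₀ hlam'
  linear_combination (Complex.I_sq) * ((s:ℂ)^2 * lam * ((K j:ℂ)^2 - (K i:ℂ)^2) * ((starRingEnd ℂ) (Z j)) * Z i / 8)
    + hinv * (W i * (starRingEnd ℂ) (Z j) + Z i * (starRingEnd ℂ) (W j)
        + Complex.I * s * ((K i:ℂ) - (K j:ℂ)) * (starRingEnd ℂ) (Z j) * Z i / 2
        + (s:ℂ)^2 * lam * ((K j:ℂ)^2 - (K i:ℂ)^2) * (starRingEnd ℂ) (Z j) * Z i / 8)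

lemma laxL_apply {ℓ : ℕ} (s lam : ℝ) (K : Fin ℓ → ℝ) (z w : Fin ℓ → ℂ) (i j : Fin ℓ) :
    laxL s lam K z w i j =
      (-(((lam : ℂ)) ^ 2 * (s : ℂ) ^ 2 / 16)) * (((Matrix.diagonal (fun i => (K i : ℂ))) ^ 2) i j)
      + (lam : ℂ) * ((1/2 : ℂ) * (w i * (starRingEnd ℂ) (z j) - z i * (starRingEnd ℂ) (w j))
          + (Complex.I * s / 4) * ((K i : ℂ) * (z i * (starRingEnd ℂ) (z j))
              + (K j : ℂ) * (z i * (starRingEnd ℂ) (z j))))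
      + z i * (starRingEnd ℂ) (z j) := by
  simp only [laxL, phiU, phiZero, zzStar, Matrix.add_apply, Matrix.smul_apply,
    Matrix.diagonal_mul, Matrix.mul_diagonal, Matrix.of_apply, smul_eq_mul]
  ring

end Aux2

/-- along solutions of `z' = w`, `w' = −isKw + μz` with
`μ = (is/2)(⟨Kw,z̄⟩ − ⟨z,Kw̄⟩) − ⟨w,w̄⟩`, on the constraint set, the Lax
equation `L(λ)' = [L(λ), A(λ)]` holds for all `λ ≠ 0`. -/
theorem magnetic_lax_complex
    (ℓ : ℕ) (z w : ℝ → Fin ℓ → ℂ) (K : Fin ℓ → ℝ) (s lam : ℝ) (hlam : lam ≠ 0)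
    (μ : ℝ → ℝ)
    (hμ : ∀ t, (μ t : ℂ) = Complex.I * s / 2 *
        ((∑ i, (K i : ℂ) * w t i * (starRingEnd ℂ) (z t i))
          - ∑ i, z t i * (K i : ℂ) * (starRingEnd ℂ) (w t i))
      - ∑ i, w t i * (starRingEnd ℂ) (w t i))
    (hz : ∀ i t, HasDerivAt (fun τ => z τ i) (w t i) t)
    (hw : ∀ i t, HasDerivAt (fun τ => w τ i)
      (-(Complex.I * s * K i * w t i) + μ t * z t i) t)
    (hnorm : ∀ t, ∑ i, Complex.normSq (z t i) = 1)
    (hperp : ∀ t, ∑ i, (w t i * (starRingEnd ℂ) (z t i)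
      + (starRingEnd ℂ) (w t i) * z t i) = 0) :
    ∀ i j t, HasDerivAt (fun τ => laxL s lam K (z τ) (w τ) i j)
      ((laxL s lam K (z t) (w t) * laxA s lam K (z t)
        - laxA s lam K (z t) * laxL s lam K (z t) (w t)) i j) t := by
  intro i j t
  -- the scalar constraints at time t
  have h1 : ∑ k, z t k * (starRingEnd ℂ) (z t k) = 1 := by
    have hn := hnorm t
    calc ∑ k, z t k * (starRingEnd ℂ) (z t k)
        = ∑ k, ((Complex.normSq (z t k) : ℝ) : ℂ) :=
          Finset.sum_congr rfl fun k _ => by rw [Complex.mul_conj]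
      _ = (((∑ k, Complex.normSq (z t k) : ℝ)) : ℂ) := by push_cast; ring
      _ = 1 := by rw [hn]; norm_num
  -- rewrite the commutator
  rw [comm_eval (z t) (w t) K s lam hlam h1 (hperp t)]
  -- derivatives of the basic bilinear entries
  have dzz : HasDerivAt (fun τ => z τ i * (starRingEnd ℂ) (z τ j))
      (w t i * (starRingEnd ℂ) (z t j) + z t i * (starRingEnd ℂ) (w t j)) t := by
    have h := (hz i t).mul ((hz j t).star)
    simpa only [starRingEnd_apply, Pi.mul_def] using h
  have dwz : HasDerivAt (fun τ => w τ i * (starRingEnd ℂ) (z τ j))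
      ((-(Complex.I * s * K i * w t i) + (μ t : ℂ) * z t i) * (starRingEnd ℂ) (z t j)
        + w t i * (starRingEnd ℂ) (w t j)) t := by
    have h := (hw i t).mul ((hz j t).star)
    simpa only [starRingEnd_apply, Pi.mul_def] using h
  have dzw : HasDerivAt (fun τ => z τ i * (starRingEnd ℂ) (w τ j))
      (w t i * (starRingEnd ℂ) (w t j)
        + z t i * star (-(Complex.I * s * K j * w t j) + (μ t : ℂ) * z t j)) t := by
    have h := (hz i t).mul ((hw j t).star)
    simpa only [starRingEnd_apply, Pi.mul_def] using h
  -- derivative of the matrix entry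
  have main : HasDerivAt (fun τ => laxL s lam K (z τ) (w τ) i j)
      ((-(((lam : ℂ)) ^ 2 * (s : ℂ) ^ 2 / 16)) * 0
        + (lam : ℂ) * ((1/2 : ℂ) * (((-(Complex.I * s * K i * w t i) + (μ t : ℂ) * z t i)
                * (starRingEnd ℂ) (z t j) + w t i * (starRingEnd ℂ) (w t j))
              - (w t i * (starRingEnd ℂ) (w t j)
                + z t i * star (-(Complex.I * s * K j * w t j) + (μ t : ℂ) * z t j)))
            + (Complex.I * s / 4) * ((K i : ℂ) * (w t i * (starRingEnd ℂ) (z t j)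
                  + z t i * (starRingEnd ℂ) (w t j))
                + (K j : ℂ) * (w t i * (starRingEnd ℂ) (z t j)
                  + z t i * (starRingEnd ℂ) (w t j))))
        + (w t i * (starRingEnd ℂ) (z t j) + z t i * (starRingEnd ℂ) (w t j))) t := by
    have base : HasDerivAt (fun τ =>
        (-(((lam : ℂ)) ^ 2 * (s : ℂ) ^ 2 / 16)) * (((Matrix.diagonal (fun i => (K i : ℂ))) ^ 2) i j)
        + (lam : ℂ) * ((1/2 : ℂ) * (w τ i * (starRingEnd ℂ) (z τ j) - z τ i * (starRingEnd ℂ) (w τ j))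
            + (Complex.I * s / 4) * ((K i : ℂ) * (z τ i * (starRingEnd ℂ) (z τ j))
                + (K j : ℂ) * (z τ i * (starRingEnd ℂ) (z τ j))))
        + z τ i * (starRingEnd ℂ) (z τ j)) _ t :=
      (((hasDerivAt_const t _).add
        ((((dwz.sub dzw).const_mul ((1/2 : ℂ))).add
          (((dzz.const_mul ((K i : ℂ))).add (dzz.const_mul ((K j : ℂ)))).const_mul
            (Complex.I * s / 4))).const_mul ((lam : ℂ)))).add dzz)
    have := base
    simp only [laxL_apply s lam K]  -- rewrite target function
    convert this using 1
    ring_nf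
  -- match the two derivative values
  convert main using 1
  simp only [Matrix.add_apply, Matrix.smul_apply, Matrix.sub_apply, Matrix.mul_diagonal,
    Matrix.diagonal_mul, phiZero, outerM, Matrix.of_apply, smul_eq_mul, star_add, star_neg,
    star_mul', Complex.star_def, _root_.map_mul, Complex.conj_I, Complex.conj_ofReal]
  ring
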